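/- arXiv:2306.15461 — 7 statements merged into one kernel-verified Lean document; each statement's English description precedes it below -/
import Mathlib

section
/- Let X be a topological space, h : X → X a continuous map, r a positive integer such that the r-th iterate of h is the identity map of X, and H a homotopy from the identity map of X to h. Fix p ∈ X and let α be the path from p to h(p) given by α(t) = H(t, p). Then the concatenated loop γ_p = α · (h ∘ α) · (h² ∘ α) · ⋯ · (h^{r−1} ∘ α) (which is a loop based at p because h^r(p) = p) represents an element of the center of the fundamental group π₁(X, p). -/
/-!
For a loop `q` at `p`, write `γₖ = α · (h ∘ α) · ⋯ · (h^{k-1} ∘ α)`. The homotopy `H` is natural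
along paths: `q · α ≃ α · (h ∘ q)`. Applying `h^k` to this and inducting on `k` gives
`q · γₖ ≃ γₖ · (h^k ∘ q)`, and for `k = r` the right-hand side is `γᵣ · q` because `h^r = id`.
-/

/-- Given a continuous map `h : X → X` and a path `α` from `p` to `h p`,
`iterLoop h α k` is the concatenated path `α · (h ∘ α) · ⋯ · (h^{k−1} ∘ α)`
from `p` to `h^[k] p`. -/
noncomputable def iterLoop {X : Type*} [TopologicalSpace X] (h : C(X, X)) {p : X}
    (α : Path p (h p)) : (k : ℕ) → Path p ((⇑h)^[k] p)
  | 0 => Path.refl p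
  | (k + 1) => (iterLoop h α k).trans (α.map (h.continuous.iterate k))

namespace Path.Homotopic

variable {X : Type*} [TopologicalSpace X] {h : C(X, X)} {H : (ContinuousMap.id X).Homotopy h}
  {x y : X} {αx : Path x (h x)} {αy : Path y (h y)}

theorem trans_evalAt_of_eq (hαx : ∀ t, αx t = H (t, x)) (hαy : ∀ t, αy t = H (t, y))
    (q : Path x y) : (q.trans αy).Homotopic (αx.trans (q.map h.continuous)) := by
  obtain rfl : αx = (H.evalAt x).cast rfl rfl := Path.ext (funext hαx)
  obtain rfl : αy = (H.evalAt y).cast rfl rfl := Path.ext (funext hαy)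
  exact map_trans_evalAt H q

theorem trans_iterLoop (hαx : ∀ t, αx t = H (t, x)) (hαy : ∀ t, αy t = H (t, y))
    (q : Path x y) (k : ℕ) :
    (q.trans (iterLoop h αy k)).Homotopic
      ((iterLoop h αx k).trans (q.map (h.continuous.iterate k))) := by
  induction k with
  | zero => exact (trans_refl q).trans (refl_trans q).symm
  | succ k ih =>
    have step : ((q.map (h.continuous.iterate k)).trans (αy.map (h.continuous.iterate k))).Homotopic
        ((αx.map (h.continuous.iterate k)).trans (q.map (h.continuous.iterate (k + 1)))) := by
      have := (trans_evalAt_of_eq hαx hαy q).map ⟨_, h.continuous.iterate k⟩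
      simp only [Path.map_trans, Path.map_map] at this
      exact this
    exact (trans_assoc _ _ _).symm.trans <| (ih.hcomp (refl _)).trans <|
      (trans_assoc _ _ _).trans <| ((refl _).hcomp step).trans (trans_assoc _ _ _).symm

end Path.Homotopic

/-- Let `X` be a topological space, `h : X → X` continuous with `h^[r] = id` for
some `r > 0`, let `H` be a homotopy from the identity of `X` to `h`, let `p ∈ X`,
and let `α(t) = H(t, p)` be the induced path from `p` to `h p`.  Then the loop
`γ_p = α · (h ∘ α) · ⋯ · (h^{r−1} ∘ α)` (a loop at `p` since `h^[r] p = p`)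
represents an element of the center of the fundamental group `π₁(X, p)`. -/
theorem iterLoop_mem_center_fundamentalGroup (X : TopCat)
    (h : C(X, X)) (r : ℕ) (hiter : (⇑h)^[r] = id)
    (H : ContinuousMap.Homotopy (ContinuousMap.id X) h) (p : X)
    (α : Path p (h p)) (hα : ∀ t : unitInterval, α t = H (t, p)) :
    FundamentalGroup.fromPath
        (⟦(iterLoop h α r).cast rfl (by rw [hiter]; rfl)⟧ :
          Path.Homotopic.Quotient p p)
      ∈ Subgroup.center (FundamentalGroup X p) := by
  have hp : p = (⇑h)^[r] p := (congrFun hiter p).symm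
  rw [Subgroup.mem_center_iff]
  intro g
  induction g using Path.Homotopic.Quotient.ind with | mk q => ?_
  have hq : (q.map (h.continuous.iterate r)).cast hp hp = q := by
    ext t
    exact congrFun hiter (q t)
  -- `Path.cast` commutes definitionally with `Path.trans`, so `natural` already reads
  -- `q · γ ≃ γ · (h^r ∘ q)` for the loop `γ = (iterLoop h α r).cast rfl hp`.
  have natural := (Path.Homotopic.trans_iterLoop hα hα q r).pathCast rfl hp
  nth_rw 1 [← hq]
  exact Path.Homotopic.Quotient.eq.mpr natural.symm
end

section
/- The group G(9₄₈) is generated by the three elements x₁, x₂, x₇; that is, the subgroup of G(9₄₈) generated by {x₁, x₂, x₇} is the whole group. -/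
/-- Relators of the Wirtinger presentation of the group of the knot `9₄₈`.
Generator `i : Fin 9` stands for `xᵢ₊₁`; the relation `a b a⁻¹ = c` is encoded
as the relator `a * b * a⁻¹ * c⁻¹`. -/
def rels948 : Set (FreeGroup (Fin 9)) :=
  let x : Fin 9 → FreeGroup (Fin 9) := FreeGroup.of
  { x 0 * x 1 * (x 0)⁻¹ * (x 2)⁻¹,
    x 3 * x 1 * (x 3)⁻¹ * (x 0)⁻¹,
    x 1 * x 3 * (x 1)⁻¹ * (x 7)⁻¹,
    x 5 * x 7 * (x 5)⁻¹ * (x 6)⁻¹,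
    x 6 * x 0 * (x 6)⁻¹ * (x 5)⁻¹,
    x 0 * x 6 * (x 0)⁻¹ * (x 8)⁻¹,
    x 4 * x 8 * (x 4)⁻¹ * (x 2)⁻¹,
    x 2 * x 5 * (x 2)⁻¹ * (x 4)⁻¹,
    x 5 * x 3 * (x 5)⁻¹ * (x 4)⁻¹ }

/-- The group `G(9₄₈)` of the knot `9₄₈`, given by its Wirtinger presentation. -/
def G948 : Type := PresentedGroup rels948

instance : Group G948 := by unfold G948; infer_instance

/-- The image `xᵢ₊₁` of the `i`-th generator in `G(9₄₈)`. -/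
def x948 (i : Fin 9) : G948 := PresentedGroup.of i

/-
A Wirtinger relation `a b a⁻¹ = c` shows that a subgroup containing `a` contains `b` iff it
contains `c`. Starting from `x₁, x₂, x₇`, the relations produce in turn `x₃` (from `x₁ x₂ x₁⁻¹`),
`x₆` (from `x₇ x₁ x₇⁻¹`), `x₉` (from `x₁ x₇ x₁⁻¹`), `x₈` (as `x₆⁻¹ x₇ x₆`), `x₄` (as `x₂⁻¹ x₈ x₂`)
and `x₅` (from `x₃ x₆ x₃⁻¹`), so the subgroup they generate contains every generator.
-/

theorem Subgroup.conj_mem_iff_of_mem {G : Type*} [Group G] (H : Subgroup G) {a b : G}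
    (ha : a ∈ H) : a * b * a⁻¹ ∈ H ↔ b ∈ H := by
  rw [H.mul_mem_cancel_right (H.inv_mem ha), H.mul_mem_cancel_left ha]

theorem PresentedGroup.of_conj_eq_of_mem {α : Type*} {rels : Set (FreeGroup α)} {a b c : α}
    (h : FreeGroup.of a * FreeGroup.of b * (FreeGroup.of a)⁻¹ * (FreeGroup.of c)⁻¹ ∈ rels) :
    (of a : PresentedGroup rels) * of b * (of a)⁻¹ = of c :=
  mk_eq_mk_of_mul_inv_mem h

theorem x948_mem_iff_of_rel {H : Subgroup G948} {a b c : Fin 9}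
    (h : FreeGroup.of a * FreeGroup.of b * (FreeGroup.of a)⁻¹ * (FreeGroup.of c)⁻¹ ∈ rels948)
    (ha : x948 a ∈ H) : x948 b ∈ H ↔ x948 c ∈ H := by
  rw [← H.conj_mem_iff_of_mem ha]
  exact iff_of_eq (congrArg (· ∈ H) (PresentedGroup.of_conj_eq_of_mem h))

/-- The group `G(9₄₈)` is generated by `x₁`, `x₂` and `x₇`. -/
theorem G948_generated_by_x1_x2_x7 :
    Subgroup.closure {x948 0, x948 1, x948 6} = (⊤ : Subgroup G948) := by
  set H := Subgroup.closure {x948 0, x948 1, x948 6}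
  have h0 : x948 0 ∈ H := Subgroup.subset_closure (by simp)
  have h1 : x948 1 ∈ H := Subgroup.subset_closure (by simp)
  have h6 : x948 6 ∈ H := Subgroup.subset_closure (by simp)
  have h2 : x948 2 ∈ H := (x948_mem_iff_of_rel (by simp [rels948]) h0).1 h1
  have h5 : x948 5 ∈ H := (x948_mem_iff_of_rel (by simp [rels948]) h6).1 h0
  have h8 : x948 8 ∈ H := (x948_mem_iff_of_rel (by simp [rels948]) h0).1 h6
  have h7 : x948 7 ∈ H := (x948_mem_iff_of_rel (by simp [rels948]) h5).2 h6
  have h3 : x948 3 ∈ H := (x948_mem_iff_of_rel (by simp [rels948]) h1).2 h7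
  have h4 : x948 4 ∈ H := (x948_mem_iff_of_rel (by simp [rels948]) h2).1 h5
  refine eq_top_iff.2 fun g _ => PresentedGroup.generated_by rels948 H (fun i => ?_) g
  fin_cases i <;> assumption
end

section
/- There exists a group homomorphism T : G(9₄₈) → G(9₄₈) satisfying T(x₁) = x₃, T(x₂) = x₆⁻¹x₃x₆, T(x₃) = x₉, T(x₄) = x₆, T(x₅) = x₁x₆x₁⁻¹, T(x₆) = x₁, T(x₇) = x₁x₄x₁⁻¹, T(x₈) = x₄, T(x₉) = x₁x₈x₁⁻¹; that is, these assignments on the generators respect all nine defining relations and hence define an endomorphism of G(9₄₈). -/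
namespace PresentedGroup

variable {α : Type*} {rels : Set (FreeGroup α)}

theorem of_mul_of_mul_inv_eq_of {a b c : α}
    (h : FreeGroup.of a * FreeGroup.of b * (FreeGroup.of a)⁻¹ * (FreeGroup.of c)⁻¹ ∈ rels) :
    (of a * of b * (of a)⁻¹ : PresentedGroup rels) = of c := by
  have h' := mk_eq_mk_of_mul_inv_mem h
  rwa [map_mul, map_mul, map_inv] at h'

end PresentedGroup

theorem FreeGroup.lift_of_mul_of_mul_inv_mul_inv_eq_one_iff {α G : Type*} [Group G]
    (f : α → G) (a b c : α) :
    lift f (of a * of b * (of a)⁻¹ * (of c)⁻¹) = 1 ↔ f a * f b * (f a)⁻¹ = f c := by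
  simp only [_root_.map_mul, _root_.map_inv, lift_apply_of, mul_inv_eq_one]

theorem x948_conj (a b c : Fin 9)
    (h : FreeGroup.of a * FreeGroup.of b * (FreeGroup.of a)⁻¹ * (FreeGroup.of c)⁻¹ ∈ rels948 := by
      simp [rels948]) :
    x948 a * x948 b * (x948 a)⁻¹ = x948 c :=
  PresentedGroup.of_mul_of_mul_inv_eq_of h

def imageT948 : Fin 9 → G948 :=
  ![x948 2, (x948 5)⁻¹ * x948 2 * x948 5, x948 8, x948 5, x948 0 * x948 5 * (x948 0)⁻¹,
    x948 0, x948 0 * x948 3 * (x948 0)⁻¹, x948 3, x948 0 * x948 7 * (x948 0)⁻¹]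

/-- By von Dyck's theorem it suffices that the proposed images satisfy the nine Wirtinger
relations; each one follows from at most two relations of `G(9₄₈)` by free reduction. -/
theorem lift_imageT948_eq_one_of_mem_rels948 :
    ∀ r ∈ rels948, FreeGroup.lift imageT948 r = 1 := by
  have e8 : x948 8 = (x948 4)⁻¹ * x948 2 * x948 4 := by rw [← x948_conj 4 8 2]; group
  have e3 : x948 3 = (x948 5)⁻¹ * x948 4 * x948 5 := by rw [← x948_conj 5 3 4]; group
  simp only [rels948, Set.mem_insert_iff, Set.mem_singleton_iff]
  rintro r (rfl | rfl | rfl | rfl | rfl | rfl | rfl | rfl | rfl) <;>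
    simp only [FreeGroup.lift_of_mul_of_mul_inv_mul_inv_eq_one_iff, imageT948, Matrix.cons_val]
  -- the images of the 4th and 9th relators hold by `rfl` and are closed by `simp`
  · rw [e8, ← x948_conj 2 5 4]; group
  · group
  · rw [e3, ← x948_conj 2 5 4]; group
  · rw [← x948_conj 0 1 2, ← x948_conj 3 1 0]; group
  · rw [← x948_conj 0 1 2, ← x948_conj 1 3 7]; group
  · rw [← x948_conj 0 6 8, ← x948_conj 5 7 6]; group
  · rw [← x948_conj 0 6 8, ← x948_conj 6 0 5]; group

/-- There is an endomorphism `T` of `G(9₄₈)` acting on the generators by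
`T(x₁) = x₃`, `T(x₂) = x₆⁻¹x₃x₆`, `T(x₃) = x₉`, `T(x₄) = x₆`, `T(x₅) = x₁x₆x₁⁻¹`,
`T(x₆) = x₁`, `T(x₇) = x₁x₄x₁⁻¹`, `T(x₈) = x₄`, `T(x₉) = x₁x₈x₁⁻¹`. -/
theorem exists_endomorphism_T :
    ∃ T : G948 →* G948,
      T (x948 0) = x948 2 ∧
      T (x948 1) = (x948 5)⁻¹ * x948 2 * x948 5 ∧
      T (x948 2) = x948 8 ∧
      T (x948 3) = x948 5 ∧
      T (x948 4) = x948 0 * x948 5 * (x948 0)⁻¹ ∧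
      T (x948 5) = x948 0 ∧
      T (x948 6) = x948 0 * x948 3 * (x948 0)⁻¹ ∧
      T (x948 7) = x948 3 ∧
      T (x948 8) = x948 0 * x948 7 * (x948 0)⁻¹ :=
  have hT (i : Fin 9) : PresentedGroup.toGroup lift_imageT948_eq_one_of_mem_rels948 (x948 i) =
      imageT948 i :=
    PresentedGroup.toGroup.of _
  ⟨_, hT 0, hT 1, hT 2, hT 3, hT 4, hT 5, hT 6, hT 7, hT 8⟩
end

section
/- Let T : G(9₄₈) → G(9₄₈) be any group homomorphism satisfying T(x₁) = x₃, T(x₂) = x₆⁻¹x₃x₆, T(x₃) = x₉, T(x₄) = x₆, T(x₅) = x₁x₆x₁⁻¹, T(x₆) = x₁, T(x₇) = x₁x₄x₁⁻¹, T(x₈) = x₄, T(x₉) = x₁x₈x₁⁻¹. Then the sixth power T⁶ of T is the inner automorphism given by conjugation by x₁x₈: for every g ∈ G(9₄₈), T⁶(g) = (x₁x₈) g (x₁x₈)⁻¹. -/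
/-!
Since `G(9₄₈)` is generated by `x₁, x₄, x₆`, it suffices to compare `T⁶` with conjugation by
`x₁x₈` on these three generators. Along the orbit `x₄ ↦ x₆ ↦ x₁ ↦ x₃ ↦ x₉ ↦ x₁x₈x₁⁻¹` the values
of `T⁶` are read off from the hypotheses, and the two Wirtinger identities
`x₃x₄x₃⁻¹ = (x₁x₈)x₄(x₁x₈)⁻¹` and `x₉x₆x₉⁻¹ = (x₁x₈)x₆(x₁x₈)⁻¹` finish the comparison.
-/

namespace PresentedGroup

theorem of_mul_of_mul_inv_eq_of_mem {α : Type*} {rels : Set (FreeGroup α)} {a b c : α}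
    (h : FreeGroup.of a * FreeGroup.of b * (FreeGroup.of a)⁻¹ * (FreeGroup.of c)⁻¹ ∈ rels) :
    (of a * of b * (of a)⁻¹ : PresentedGroup rels) = of c := by
  have h' := mk_eq_mk_of_mul_inv_mem h
  simp only [map_mul, map_inv] at h'
  exact h'

end PresentedGroup

namespace G948

theorem conj_eq_of_mem {a b c : Fin 9}
    (h : FreeGroup.of a * FreeGroup.of b * (FreeGroup.of a)⁻¹ * (FreeGroup.of c)⁻¹ ∈ rels948) :
    x948 a * x948 b * (x948 a)⁻¹ = x948 c :=
  PresentedGroup.of_mul_of_mul_inv_eq_of_mem h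

theorem conj_zero_one : x948 0 * x948 1 * (x948 0)⁻¹ = x948 2 :=
  conj_eq_of_mem (by simp [rels948])

theorem conj_three_one : x948 3 * x948 1 * (x948 3)⁻¹ = x948 0 :=
  conj_eq_of_mem (by simp [rels948])

theorem conj_one_three : x948 1 * x948 3 * (x948 1)⁻¹ = x948 7 :=
  conj_eq_of_mem (by simp [rels948])

theorem conj_five_seven : x948 5 * x948 7 * (x948 5)⁻¹ = x948 6 :=
  conj_eq_of_mem (by simp [rels948])

theorem conj_six_zero : x948 6 * x948 0 * (x948 6)⁻¹ = x948 5 :=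
  conj_eq_of_mem (by simp [rels948])

theorem conj_zero_six : x948 0 * x948 6 * (x948 0)⁻¹ = x948 8 :=
  conj_eq_of_mem (by simp [rels948])

theorem conj_five_three : x948 5 * x948 3 * (x948 5)⁻¹ = x948 4 :=
  conj_eq_of_mem (by simp [rels948])

theorem closure_zero_three_five : Subgroup.closure {x948 0, x948 3, x948 5} = ⊤ := by
  set H := Subgroup.closure ({x948 0, x948 3, x948 5} : Set G948)
  have conj_mem {a b : G948} (ha : a ∈ H) (hb : b ∈ H) : a * b * a⁻¹ ∈ H :=
    H.mul_mem (H.mul_mem ha hb) (H.inv_mem ha)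
  have h0 : x948 0 ∈ H := Subgroup.subset_closure (by simp)
  have h3 : x948 3 ∈ H := Subgroup.subset_closure (by simp)
  have h5 : x948 5 ∈ H := Subgroup.subset_closure (by simp)
  have h1 : x948 1 ∈ H := by
    have h : x948 1 = (x948 3)⁻¹ * x948 0 * (x948 3)⁻¹⁻¹ := by rw [← conj_three_one]; group
    exact h ▸ conj_mem (H.inv_mem h3) h0
  have h2 : x948 2 ∈ H := conj_zero_one ▸ conj_mem h0 h1
  have h7 : x948 7 ∈ H := conj_one_three ▸ conj_mem h1 h3
  have h6 : x948 6 ∈ H := conj_five_seven ▸ conj_mem h5 h7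
  have h8 : x948 8 ∈ H := conj_zero_six ▸ conj_mem h0 h6
  have h4 : x948 4 ∈ H := conj_five_three ▸ conj_mem h5 h3
  refine eq_top_iff.2 fun g _ => PresentedGroup.generated_by rels948 H (fun i => ?_) g
  fin_cases i <;> assumption

theorem conj_two_three :
    x948 2 * x948 3 * (x948 2)⁻¹ = (x948 0 * x948 7) * x948 3 * (x948 0 * x948 7)⁻¹ := by
  rw [← conj_zero_one, ← conj_one_three, ← conj_three_one]; group

theorem conj_eight_five :
    x948 8 * x948 5 * (x948 8)⁻¹ = (x948 0 * x948 7) * x948 5 * (x948 0 * x948 7)⁻¹ := by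
  have h7 : x948 7 = (x948 5)⁻¹ * x948 6 * x948 5 := by rw [← conj_five_seven]; group
  rw [h7, ← conj_zero_six, ← conj_six_zero]; group

end G948

theorem T_sixth_power_is_conjugation_general (T : G948 →* G948)
    (h1 : T (x948 0) = x948 2)
    (h3 : T (x948 2) = x948 8)
    (h4 : T (x948 3) = x948 5)
    (h6 : T (x948 5) = x948 0)
    (h8 : T (x948 7) = x948 3)
    (h9 : T (x948 8) = x948 0 * x948 7 * (x948 0)⁻¹) :
    ∀ g : G948, T (T (T (T (T (T g))))) =
      (x948 0 * x948 7) * g * (x948 0 * x948 7)⁻¹ := by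
  have hT6 : T.comp (T.comp (T.comp (T.comp (T.comp T)))) =
      (MulAut.conj (x948 0 * x948 7)).toMonoidHom := by
    refine MonoidHom.eq_of_eqOn_dense G948.closure_zero_three_five ?_
    rintro _ (rfl | rfl | rfl) <;>
      simp only [MonoidHom.comp_apply, MulEquiv.coe_toMonoidHom, MulAut.conj_apply] <;>
      simp only [map_mul, map_inv, h1, h3, h4, h6, h8, h9]
    · group
    · exact G948.conj_two_three
    · exact G948.conj_eight_five
  exact DFunLike.congr_fun hT6

/-- Any endomorphism `T` of `G(9₄₈)` with the prescribed action on the generators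
has sixth power `T⁶` equal to conjugation by `x₁x₈`. -/
theorem T_sixth_power_is_conjugation (T : G948 →* G948)
    (h1 : T (x948 0) = x948 2)
    (h2 : T (x948 1) = (x948 5)⁻¹ * x948 2 * x948 5)
    (h3 : T (x948 2) = x948 8)
    (h4 : T (x948 3) = x948 5)
    (h5 : T (x948 4) = x948 0 * x948 5 * (x948 0)⁻¹)
    (h6 : T (x948 5) = x948 0)
    (h7 : T (x948 6) = x948 0 * x948 3 * (x948 0)⁻¹)
    (h8 : T (x948 7) = x948 3)
    (h9 : T (x948 8) = x948 0 * x948 7 * (x948 0)⁻¹) :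
    ∀ g : G948, T (T (T (T (T (T g))))) =
      (x948 0 * x948 7) * g * (x948 0 * x948 7)⁻¹ :=
  T_sixth_power_is_conjugation_general T h1 h3 h4 h6 h8 h9
end

section
/- Let T : G(9₄₈) → G(9₄₈) be any group homomorphism satisfying T(x₁) = x₃, T(x₂) = x₆⁻¹x₃x₆, T(x₃) = x₉, T(x₄) = x₆, T(x₅) = x₁x₆x₁⁻¹, T(x₆) = x₁, T(x₇) = x₁x₄x₁⁻¹, T(x₈) = x₄, T(x₉) = x₁x₈x₁⁻¹, and define S : G(9₄₈) → G(9₄₈) by S(g) = x₁⁻¹ · T³(g) · x₁. Then S satisfies: S(x₁) = x₈, S(x₂) = x₄, S(x₃) = x₁⁻¹x₃x₄x₃⁻¹x₁, S(x₄) = x₂, S(x₅) = x₁⁻¹x₉x₃x₉⁻¹x₁, S(x₆) = x₇, S(x₇) = x₆, S(x₈) = x₁, S(x₉) = x₁⁻¹x₉x₆x₉⁻¹x₁. -/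
/-! Expanding `T` three times with the given table writes each `S(xᵢ)` as a word in the
generators. Eliminating `x₃, x₆, x₈, x₉` by the Wirtinger relations `x₃ = x₁x₂x₁⁻¹`,
`x₆ = x₇x₁x₇⁻¹`, `x₈ = x₂x₄x₂⁻¹`, `x₉ = x₁x₇x₁⁻¹` then turns every claimed identity into an
identity of words in `x₁, x₂, x₄, x₇` that already holds in the free group. -/

lemma PresentedGroup.of_eq_conj_of_mem {α : Type*} {rels : Set (FreeGroup α)} {a b c : α}
    (h : FreeGroup.of a * FreeGroup.of b * (FreeGroup.of a)⁻¹ * (FreeGroup.of c)⁻¹ ∈ rels) :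
    (of c : PresentedGroup rels) = of a * of b * (of a)⁻¹ :=
  (mk_eq_mk_of_mul_inv_mem h).symm

lemma x948_two_eq : x948 2 = x948 0 * x948 1 * (x948 0)⁻¹ :=
  PresentedGroup.of_eq_conj_of_mem (by simp [rels948])

lemma x948_five_eq : x948 5 = x948 6 * x948 0 * (x948 6)⁻¹ :=
  PresentedGroup.of_eq_conj_of_mem (by simp [rels948])

lemma x948_seven_eq : x948 7 = x948 1 * x948 3 * (x948 1)⁻¹ :=
  PresentedGroup.of_eq_conj_of_mem (by simp [rels948])

lemma x948_eight_eq : x948 8 = x948 0 * x948 6 * (x948 0)⁻¹ :=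
  PresentedGroup.of_eq_conj_of_mem (by simp [rels948])

/-- For any endomorphism `T` of `G(9₄₈)` with the prescribed action on the generators,
the map `S : g ↦ x₁⁻¹ · T³(g) · x₁` satisfies `S(x₁) = x₈`, `S(x₂) = x₄`,
`S(x₃) = x₁⁻¹x₃x₄x₃⁻¹x₁`, `S(x₄) = x₂`, `S(x₅) = x₁⁻¹x₉x₃x₉⁻¹x₁`, `S(x₆) = x₇`,
`S(x₇) = x₆`, `S(x₈) = x₁`, `S(x₉) = x₁⁻¹x₉x₆x₉⁻¹x₁`. -/
theorem S_action (T : G948 →* G948)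
    (h1 : T (x948 0) = x948 2)
    (h2 : T (x948 1) = (x948 5)⁻¹ * x948 2 * x948 5)
    (h3 : T (x948 2) = x948 8)
    (h4 : T (x948 3) = x948 5)
    (h5 : T (x948 4) = x948 0 * x948 5 * (x948 0)⁻¹)
    (h6 : T (x948 5) = x948 0)
    (h7 : T (x948 6) = x948 0 * x948 3 * (x948 0)⁻¹)
    (h8 : T (x948 7) = x948 3)
    (h9 : T (x948 8) = x948 0 * x948 7 * (x948 0)⁻¹)
    (S : G948 → G948)
    (hS : ∀ g, S g = (x948 0)⁻¹ * T (T (T g)) * x948 0) :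
    S (x948 0) = x948 7 ∧
    S (x948 1) = x948 3 ∧
    S (x948 2) = (x948 0)⁻¹ * x948 2 * x948 3 * (x948 2)⁻¹ * x948 0 ∧
    S (x948 3) = x948 1 ∧
    S (x948 4) = (x948 0)⁻¹ * x948 8 * x948 2 * (x948 8)⁻¹ * x948 0 ∧
    S (x948 5) = x948 6 ∧
    S (x948 6) = x948 5 ∧
    S (x948 7) = x948 0 ∧
    S (x948 8) = (x948 0)⁻¹ * x948 8 * x948 5 * (x948 8)⁻¹ * x948 0 := by
  refine ⟨?_, ?_, ?_, ?_, ?_, ?_, ?_, ?_, ?_⟩ <;>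
    simp only [hS, map_mul, map_inv, h1, h2, h3, h4, h5, h6, h7, h8, h9] <;>
    simp -failIfUnchanged only [x948_two_eq, x948_five_eq, x948_seven_eq, x948_eight_eq] <;>
    group
end

section
/- Let T : G(9₄₈) → G(9₄₈) be any group homomorphism satisfying T(x₁) = x₃, T(x₂) = x₆⁻¹x₃x₆, T(x₃) = x₉, T(x₄) = x₆, T(x₅) = x₁x₆x₁⁻¹, T(x₆) = x₁, T(x₇) = x₁x₄x₁⁻¹, T(x₈) = x₄, T(x₉) = x₁x₈x₁⁻¹, and define S : G(9₄₈) → G(9₄₈) by S(g) = x₁⁻¹ · T³(g) · x₁. Then S ∘ S is the identity map of G(9₄₈); in particular S is an automorphism of G(9₄₈). -/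
lemma rel948_eq_one {r : FreeGroup (Fin 9)} (hr : r ∈ rels948) :
    PresentedGroup.mk rels948 r = 1 :=
  (QuotientGroup.eq_one_iff _).mpr (Subgroup.subset_normalClosure hr)

lemma rel948 {a b c : Fin 9}
    (h : FreeGroup.of a * FreeGroup.of b * (FreeGroup.of a)⁻¹ * (FreeGroup.of c)⁻¹ ∈ rels948) :
    x948 a * x948 b * (x948 a)⁻¹ = x948 c := by
  have := rel948_eq_one h
  simp only [map_mul, map_inv] at this
  rw [mul_inv_eq_one] at this
  exact this

lemma rel1 : x948 0 * x948 1 * (x948 0)⁻¹ = x948 2 := rel948 (by simp [rels948])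
lemma rel2 : x948 3 * x948 1 * (x948 3)⁻¹ = x948 0 := rel948 (by simp [rels948])
lemma rel3 : x948 1 * x948 3 * (x948 1)⁻¹ = x948 7 := rel948 (by simp [rels948])
lemma rel4 : x948 5 * x948 7 * (x948 5)⁻¹ = x948 6 := rel948 (by simp [rels948])
lemma rel5 : x948 6 * x948 0 * (x948 6)⁻¹ = x948 5 := rel948 (by simp [rels948])
lemma rel6 : x948 0 * x948 6 * (x948 0)⁻¹ = x948 8 := rel948 (by simp [rels948])
lemma rel8 : x948 2 * x948 5 * (x948 2)⁻¹ = x948 4 := rel948 (by simp [rels948])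
lemma rel9 : x948 5 * x948 3 * (x948 5)⁻¹ = x948 4 := rel948 (by simp [rels948])

lemma rel4' : x948 7 = (x948 5)⁻¹ * x948 6 * x948 5 := by rw [← rel4]; group
lemma rel5' : x948 0 = (x948 6)⁻¹ * x948 5 * x948 6 := by rw [← rel5]; group

lemma of_eq_x948 (i : Fin 9) : (PresentedGroup.of i : PresentedGroup rels948) = x948 i := rfl

/-- For any endomorphism `T` of `G(9₄₈)` with the prescribed action on the generators,
the map `S : g ↦ x₁⁻¹ · T³(g) · x₁` is an involution: `S ∘ S = id`; in particular
`S` is an automorphism (a bijection). -/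
theorem S_squared_is_identity (T : G948 →* G948)
    (h1 : T (x948 0) = x948 2)
    (h2 : T (x948 1) = (x948 5)⁻¹ * x948 2 * x948 5)
    (h3 : T (x948 2) = x948 8)
    (h4 : T (x948 3) = x948 5)
    (h5 : T (x948 4) = x948 0 * x948 5 * (x948 0)⁻¹)
    (h6 : T (x948 5) = x948 0)
    (h7 : T (x948 6) = x948 0 * x948 3 * (x948 0)⁻¹)
    (h8 : T (x948 7) = x948 3)
    (h9 : T (x948 8) = x948 0 * x948 7 * (x948 0)⁻¹)
    (S : G948 → G948)
    (hS : ∀ g, S g = (x948 0)⁻¹ * T (T (T g)) * x948 0) :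
    S ∘ S = id ∧ Function.Bijective S := by
  -- values of T³ on the generators
  have t0 : T (T (T (x948 0))) = x948 0 * x948 7 * (x948 0)⁻¹ := by rw [h1, h3, h9]
  have t1 : T (T (T (x948 1))) = x948 0 * x948 3 * (x948 0)⁻¹ := by
    have e : T (T (x948 1)) = x948 6 := by
      rw [h2]; simp only [map_mul, map_inv, h6, h3]
      rw [← rel6]; group
    rw [e, h7]
  have t2 : T (T (T (x948 2))) = x948 2 * x948 3 * (x948 2)⁻¹ := by
    rw [h3, h9]; simp only [map_mul, map_inv, h1, h8]
  have t3 : T (T (T (x948 3))) = x948 2 := by rw [h4, h6, h1]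
  have t4 : T (T (T (x948 4))) = x948 8 * x948 2 * (x948 8)⁻¹ := by
    rw [h5]; simp only [map_mul, map_inv, h1, h6, h3]
  have t5 : T (T (T (x948 5))) = x948 8 := by rw [h6, h1, h3]
  have t6 : T (T (T (x948 6))) = x948 0 * x948 5 * (x948 0)⁻¹ := by
    have e : T (T (x948 6)) = x948 4 := by
      rw [h7]; simp only [map_mul, map_inv, h1, h4]
      exact rel8
    rw [e, h5]
  have t7 : T (T (T (x948 7))) = x948 0 := by rw [h8, h4, h6]
  have t8 : T (T (T (x948 8))) = x948 8 * x948 5 * (x948 8)⁻¹ := by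
    rw [h9]; simp only [map_mul, map_inv, h1, h8, h3, h4]
  have key3 : x948 2 * x948 3 * (x948 2)⁻¹
      = (x948 0 * x948 7) * x948 3 * (x948 0 * x948 7)⁻¹ := by
    rw [← rel1, ← rel3, ← rel2]; group
  have key5 : x948 8 * x948 5 * (x948 8)⁻¹
      = (x948 0 * x948 7) * x948 5 * (x948 0 * x948 7)⁻¹ := by
    rw [← rel6, rel4', rel5']; group
  -- T⁶ is conjugation by x₁x₇ (indices 0 and 6... here `x948 0 * x948 7`)
  have hhom : (T.comp (T.comp T)).comp (T.comp (T.comp T))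
      = (MulAut.conj (x948 0 * x948 7)).toMonoidHom := by
    apply PresentedGroup.ext
    intro i
    fin_cases i
    · show T (T (T (T (T (T (x948 0)))))) = (x948 0 * x948 7) * x948 0 * (x948 0 * x948 7)⁻¹
      simp only [map_mul, map_inv, t0, t7]; group
    · show T (T (T (T (T (T (x948 1)))))) = (x948 0 * x948 7) * x948 1 * (x948 0 * x948 7)⁻¹
      simp only [map_mul, map_inv, t1, t0, t3]
      rw [← rel1]; group
    · show T (T (T (T (T (T (x948 2)))))) = (x948 0 * x948 7) * x948 2 * (x948 0 * x948 7)⁻¹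
      simp only [map_mul, map_inv, t2, t3]
      rw [← rel1, ← rel3, ← rel2]; group
    · show T (T (T (T (T (T (x948 3)))))) = (x948 0 * x948 7) * x948 3 * (x948 0 * x948 7)⁻¹
      simp only [map_mul, map_inv, t3, t2]
      rw [← rel1, ← rel3, ← rel2]; group
    · show T (T (T (T (T (T (x948 4)))))) = (x948 0 * x948 7) * x948 4 * (x948 0 * x948 7)⁻¹
      simp only [map_mul, map_inv, t4, t8, t2]
      rw [key5, key3, ← rel9]; group
    · show T (T (T (T (T (T (x948 5)))))) = (x948 0 * x948 7) * x948 5 * (x948 0 * x948 7)⁻¹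
      simp only [map_mul, map_inv, t5, t8]
      rw [← rel6, rel4', rel5']; group
    · show T (T (T (T (T (T (x948 6)))))) = (x948 0 * x948 7) * x948 6 * (x948 0 * x948 7)⁻¹
      simp only [map_mul, map_inv, t6, t0, t5]
      rw [← rel6]; group
    · show T (T (T (T (T (T (x948 7)))))) = (x948 0 * x948 7) * x948 7 * (x948 0 * x948 7)⁻¹
      simp only [map_mul, map_inv, t7, t0]; group
    · show T (T (T (T (T (T (x948 8)))))) = (x948 0 * x948 7) * x948 8 * (x948 0 * x948 7)⁻¹
      simp only [map_mul, map_inv, t8, t5]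
      rw [← rel6, rel4', rel5']; group
  have key : ∀ g : G948, T (T (T (T (T (T g)))))
      = (x948 0 * x948 7) * g * (x948 0 * x948 7)⁻¹ := by
    intro g
    have := DFunLike.congr_fun hhom g
    simpa only [MonoidHom.comp_apply, MulEquiv.coe_toMonoidHom, MulAut.conj_apply] using this
  have hSS : ∀ g, S (S g) = g := by
    intro g
    rw [hS, hS g]
    simp only [map_mul, map_inv, t0]
    rw [key g]
    group
  refine ⟨funext fun g => hSS g, Function.bijective_iff_has_inverse.mpr ⟨S, hSS, hSS⟩⟩
end

section
/- There is no element z ∈ G(9₄₈) such that z³ = x₁x₈; that is, the element x₁x₈ is not a cube in G(9₄₈). -/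
def phi948 : G948 →* Multiplicative ℤ :=
  PresentedGroup.toGroup (f := fun _ : Fin 9 => Multiplicative.ofAdd (1 : ℤ)) (by
    intro r hr
    simp only [rels948, Set.mem_insert_iff, Set.mem_singleton_iff] at hr
    rcases hr with h|h|h|h|h|h|h|h|h <;> subst h <;>
      simp [FreeGroup.lift_apply_of, ← ofAdd_add, ← ofAdd_neg]
    )

/-- The element `x₁x₈` is not a cube in `G(9₄₈)`. -/
theorem x1x8_not_a_cube : ¬ ∃ z : G948, z ^ 3 = x948 0 * x948 7 := by
  rintro ⟨z, hz⟩
  have h := congrArg phi948 hz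
  rw [map_pow, map_mul] at h
  have hx : ∀ i, phi948 (x948 i) = Multiplicative.ofAdd (1 : ℤ) := fun i => by
    unfold phi948 x948
    show PresentedGroup.toGroup _ (PresentedGroup.of i) = _
    exact PresentedGroup.toGroup.of _
  rw [hx, hx] at h
  set k := Multiplicative.toAdd (phi948 z) with hk
  have : 3 * k = 2 := by
    have := congrArg Multiplicative.toAdd h
    simpa [← hk, toAdd_pow, ← ofAdd_add, mul_comm] using this
  omega
end
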